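/- arXiv:1511.02041 — 5 statements merged into one kernel-verified Lean document; each statement's English description precedes it below -/
import Mathlib

section
/- The SU(2)-orbit description and the real description of the Chiang-type lagrangian coincide: the set { [ᾱ²+β̄² : √2(ᾱβ−αβ̄) : α²+β²] ∈ ℙ(ℂ³) : α,β ∈ ℂ, |α|²+|β|²=1 } is equal to the set { [X−iY : √2·i·Z : X+iY] ∈ ℙ(ℂ³) : X,Y,Z ∈ ℝ, X²+Y²+Z²=1 }. -/
/-!
The map `(α, β) ↦ (α² + β², 2 Im(ᾱβ))` is a form of the Hopf map `S³ → S² ⊆ ℂ × ℝ`: the vector `orbitVec α β`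
is literally `sphereVec` of its image, and `|α² + β²|² + (2 Im ᾱβ)² = (|α|² + |β|²)²`. Surjectivity
is seen in the coordinates `p = α + iβ`, `q = α - iβ`, in which `α² + β² = pq` and
`2 Im ᾱβ = (|q|² - |p|²)/2`; a point `(w, Z)` of `S²` is then hit by any `p, q` with
`|p|² = 1 - Z`, `|q|² = 1 + Z`, `pq = w`, which exist because `|w|² = (1 - Z)(1 + Z)`.
-/

open Complex

/-- The vector `(X - iY, √2 i Z, X + iY)` in `ℂ³`. -/
noncomputable def sphereVec (X Y Z : ℝ) : Fin 3 → ℂ :=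
  ![(X : ℂ) - Complex.I * Y, (Real.sqrt 2 : ℂ) * Complex.I * Z, (X : ℂ) + Complex.I * Y]

lemma sphereVec_ne_zero {X Y Z : ℝ} (h : X ^ 2 + Y ^ 2 + Z ^ 2 = 1) :
    sphereVec X Y Z ≠ 0 := by
  intro h0
  have h0' : (X : ℂ) - Complex.I * Y = 0 := congrFun h0 0
  have h2' : (X : ℂ) + Complex.I * Y = 0 := congrFun h0 2
  have h1' : (Real.sqrt 2 : ℂ) * Complex.I * Z = 0 := congrFun h0 1
  have hX : X = 0 := by
    have := congrArg Complex.re (by linear_combination h0' + h2' : (2 : ℂ) * X = 0)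
    simpa using this
  have hY : Y = 0 := by
    have := congrArg Complex.im (by linear_combination h2' - h0' : (2 : ℂ) * Complex.I * Y = 0)
    simpa using this
  have hZ : Z = 0 := by
    rcases mul_eq_zero.mp h1' with h' | h'
    · rcases mul_eq_zero.mp h' with h'' | h''
      · exact absurd h'' (by simp [Complex.ext_iff, Real.sqrt_eq_zero'])
      · exact absurd h'' Complex.I_ne_zero
    · exact_mod_cast h'
  rw [hX, hY, hZ] at h
  norm_num at h

/-- The Chiang-type lagrangian `𝓛₂ ⊆ ℙ(ℂ³)`, in its real description. -/
noncomputable def ChiangL2 : Set (Projectivization ℂ (Fin 3 → ℂ)) :=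
  {P | ∃ (X Y Z : ℝ) (h : X ^ 2 + Y ^ 2 + Z ^ 2 = 1),
    P = Projectivization.mk ℂ (sphereVec X Y Z) (sphereVec_ne_zero h)}

/-- The point of the `SU(2)`-orbit description corresponding to `(α, β)`. -/
noncomputable def orbitVec (α β : ℂ) : Fin 3 → ℂ :=
  ![(starRingEnd ℂ α) ^ 2 + (starRingEnd ℂ β) ^ 2,
    (Real.sqrt 2 : ℂ) * ((starRingEnd ℂ α) * β - α * (starRingEnd ℂ β)),
    α ^ 2 + β ^ 2]

lemma key_identity (α β : ℂ) :
    ‖α ^ 2 + β ^ 2‖ ^ 2 + 4 * ((starRingEnd ℂ α * β).im) ^ 2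
      = (‖α‖ ^ 2 + ‖β‖ ^ 2) ^ 2 := by
  rw [Complex.sq_norm, Complex.sq_norm, Complex.sq_norm]
  simp only [Complex.normSq_apply, Complex.add_re, Complex.add_im, Complex.mul_re,
    Complex.mul_im, Complex.conj_re, Complex.conj_im, pow_two]
  ring

lemma orbitVec_ne_zero {α β : ℂ} (h : ‖α‖ ^ 2 + ‖β‖ ^ 2 = 1) :
    orbitVec α β ≠ 0 := by
  intro h0
  have h2' : α ^ 2 + β ^ 2 = 0 := congrFun h0 2
  have h1' : (Real.sqrt 2 : ℂ) * ((starRingEnd ℂ α) * β - α * (starRingEnd ℂ β)) = 0 :=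
    congrFun h0 1
  have hs : ((starRingEnd ℂ α) * β - α * (starRingEnd ℂ β)) = 0 := by
    rcases mul_eq_zero.mp h1' with h' | h'
    · exact absurd h' (by simp [Complex.ext_iff])
    · exact h'
  have him : (starRingEnd ℂ α * β).im = 0 := by
    have : α * (starRingEnd ℂ β) = starRingEnd ℂ (starRingEnd ℂ α * β) := by
      simp [mul_comm]
    rw [this, sub_eq_zero] at hs
    have h3 := congrArg Complex.im hs
    simp only [Complex.conj_im] at h3
    linarith
  have := key_identity α β
  rw [h2', him, h] at this
  norm_num at this

open ComplexConjugate

lemma orbitVec_eq_sphereVec (α β : ℂ) :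
    orbitVec α β = sphereVec (α ^ 2 + β ^ 2).re (α ^ 2 + β ^ 2).im (2 * (conj α * β).im) := by
  ext i
  fin_cases i <;> apply Complex.ext <;>
    simp only [orbitVec, sphereVec, Fin.zero_eta, Fin.mk_one, Fin.reduceFinMk, Matrix.cons_val,
      add_re, add_im, sub_re, sub_im, mul_re, mul_im, pow_two, conj_re, conj_im, I_re, I_im,
      ofReal_re, ofReal_im] <;> ring

lemma exists_mul_eq_of_sq_norm_eq_mul (w : ℂ) {a b : ℝ} (ha : 0 ≤ a) (hb : 0 ≤ b)
    (h : ‖w‖ ^ 2 = a * b) : ∃ p q : ℂ, ‖p‖ ^ 2 = a ∧ ‖q‖ ^ 2 = b ∧ p * q = w := by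
  refine ⟨√a * exp (arg w * I), √b, ?_, ?_, ?_⟩
  · rw [norm_mul, norm_exp_ofReal_mul_I, mul_one, norm_real, Real.norm_of_nonneg (by positivity),
      Real.sq_sqrt ha]
  · rw [norm_real, Real.norm_of_nonneg (by positivity), Real.sq_sqrt hb]
  · have hsqrt : √a * √b = ‖w‖ := by
      rw [← Real.sqrt_mul ha, ← h, Real.sqrt_sq (norm_nonneg w)]
    conv_rhs => rw [← norm_mul_exp_arg_mul_I w]
    rw [← hsqrt]
    push_cast
    ring

section LightCone

variable (p q : ℂ)

lemma sq_add_sq_half_add_half_mul_I_sub :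
    ((p + q) / 2) ^ 2 + (I * (q - p) / 2) ^ 2 = p * q := by
  linear_combination ((q - p) ^ 2 / 4) * I_sq

lemma sq_norm_half_add_add_sq_norm_half_mul_I_sub :
    ‖(p + q) / 2‖ ^ 2 + ‖I * (q - p) / 2‖ ^ 2 = (‖p‖ ^ 2 + ‖q‖ ^ 2) / 2 := by
  simp only [Complex.sq_norm, normSq_apply, div_ofNat_re, div_ofNat_im, add_re, add_im, sub_re,
    sub_im, mul_re, mul_im, I_re, I_im]
  ring

lemma two_mul_im_conj_half_add_mul_half_mul_I_sub :
    2 * (conj ((p + q) / 2) * (I * (q - p) / 2)).im = (‖q‖ ^ 2 - ‖p‖ ^ 2) / 2 := by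
  simp only [Complex.sq_norm, normSq_apply, div_ofNat_re, div_ofNat_im, add_re, add_im, sub_re,
    sub_im, mul_re, mul_im, I_re, I_im, conj_re, conj_im]
  ring

end LightCone

lemma exists_sq_add_sq_eq_of_sphere {X Y Z : ℝ} (h : X ^ 2 + Y ^ 2 + Z ^ 2 = 1) :
    ∃ α β : ℂ, ‖α‖ ^ 2 + ‖β‖ ^ 2 = 1 ∧ α ^ 2 + β ^ 2 = ⟨X, Y⟩ ∧ 2 * (conj α * β).im = Z := by
  have hZ : Z ^ 2 ≤ 1 := by nlinarith
  obtain ⟨p, q, hp, hq, hpq⟩ := exists_mul_eq_of_sq_norm_eq_mul ⟨X, Y⟩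
    (a := 1 - Z) (b := 1 + Z) (by nlinarith) (by nlinarith)
    (by rw [Complex.sq_norm, normSq_mk]; linear_combination h)
  refine ⟨(p + q) / 2, I * (q - p) / 2, ?_, ?_, ?_⟩
  · rw [sq_norm_half_add_add_sq_norm_half_mul_I_sub, hp, hq]; ring
  · rw [sq_add_sq_half_add_half_mul_I_sub, hpq]
  · rw [two_mul_im_conj_half_add_mul_half_mul_I_sub, hp, hq]; ring

/-- The `SU(2)`-orbit description and the real description of the
Chiang-type lagrangian coincide. -/
theorem stmt_0 :
    {P : Projectivization ℂ (Fin 3 → ℂ) |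
      ∃ (α β : ℂ) (h : ‖α‖ ^ 2 + ‖β‖ ^ 2 = 1),
        P = Projectivization.mk ℂ (orbitVec α β) (orbitVec_ne_zero h)} = ChiangL2 := by
  ext P
  constructor
  · rintro ⟨α, β, h, rfl⟩
    refine ⟨(α ^ 2 + β ^ 2).re, (α ^ 2 + β ^ 2).im, 2 * (conj α * β).im, ?_,
      by simp only [orbitVec_eq_sphereVec]⟩
    have := key_identity α β
    rw [h, Complex.sq_norm, normSq_apply] at this
    linear_combination this
  · rintro ⟨X, Y, Z, h, rfl⟩
    obtain ⟨α, β, hαβ, hw, hZ⟩ := exists_sq_add_sq_eq_of_sphere h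
    refine ⟨α, β, hαβ, ?_⟩
    simp only [orbitVec_eq_sphereVec, hw, hZ]
end

section
/- Let f : S² → ℙ(ℂ³) be defined by f(X,Y,Z) = [X−iY : √2·i·Z : X+iY] for real triples with X²+Y²+Z²=1. Then for any two such triples v=(X,Y,Z) and w=(X',Y',Z'), f(v)=f(w) if and only if w = v or w = −v. Consequently f induces a bijection from the quotient of the unit sphere S² ⊂ ℝ³ by the antipodal map onto the set 𝓛₂ := { [X−iY : √2·i·Z : X+iY] : X,Y,Z ∈ ℝ, X²+Y²+Z²=1 }, so 𝓛₂ is in bijection with the real projective plane ℝP². -/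
/-!
The quadratic form `q v = v₀ v₂ - v₁² / 2` on `ℂ³` is homogeneous of degree two and takes the
value `X² + Y² + Z²` at `sphereVec X Y Z`. Hence if `c • sphereVec w = sphereVec v` with
`v, w ∈ S²`, then `c² = 1`, so `c = ±1`, and as `sphereVec` is injective and odd, `w = ±v`.
The same argument with `x₀² + x₁² + x₂²` shows that `S² → ℝP²` identifies exactly antipodal
points; it is onto by normalisation.
-/

open Complex

/-- The unit sphere `S² ⊆ ℝ³` (as triples). -/
abbrev Sphere2 : Type := {v : ℝ × ℝ × ℝ // v.1 ^ 2 + v.2.1 ^ 2 + v.2.2 ^ 2 = 1}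

/-- The antipodal equivalence relation on the unit sphere. -/
def antipodalRel : Setoid Sphere2 where
  r v w := w.val = v.val ∨ w.val = -v.val
  iseqv := by
    constructor
    · exact fun v => Or.inl rfl
    · rintro v w (h | h)
      · exact Or.inl h.symm
      · exact Or.inr (by rw [h, neg_neg])
    · rintro v w u (h | h) (h' | h') <;> rw [h', h] <;> simp

namespace Projectivization

theorem mk_eq_mk_iff_of_sq_homogeneous {K V : Type*} [DivisionRing K] [AddCommGroup V]
    [Module K V] (Q : V → K) (hQ : ∀ (a : K) (v : V), Q (a • v) = a ^ 2 * Q v)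
    {v w : V} (hv : v ≠ 0) (hw : w ≠ 0) (hQv : Q v = 1) (hQw : Q w = 1) :
    mk K v hv = mk K w hw ↔ v = w ∨ v = -w := by
  rw [mk_eq_mk_iff']
  constructor
  · rintro ⟨a, rfl⟩
    have ha : a ^ 2 = 1 := by simpa [hQ, hQw] using hQv
    rcases sq_eq_one_iff.mp ha with rfl | rfl <;> simp
  · rintro (rfl | rfl)
    exacts [⟨1, one_smul _ _⟩, ⟨-1, neg_one_smul _ _⟩]

end Projectivization

open Projectivization

noncomputable def chiangForm (v : Fin 3 → ℂ) : ℂ := v 0 * v 2 - v 1 ^ 2 / 2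

theorem chiangForm_smul (a : ℂ) (v : Fin 3 → ℂ) :
    chiangForm (a • v) = a ^ 2 * chiangForm v := by
  simp only [chiangForm, Pi.smul_apply, smul_eq_mul]
  ring

theorem chiangForm_sphereVec (X Y Z : ℝ) :
    chiangForm (sphereVec X Y Z) = ((X ^ 2 + Y ^ 2 + Z ^ 2 : ℝ) : ℂ) := by
  have hsqrt : ((Real.sqrt 2 : ℝ) : ℂ) ^ 2 = 2 := by
    rw [← ofReal_pow, Real.sq_sqrt zero_le_two, ofReal_ofNat]
  simp only [chiangForm, sphereVec, Matrix.cons_val_zero, Matrix.cons_val_one,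
    Matrix.cons_val_two, Matrix.head_cons, Matrix.tail_cons]
  push_cast
  linear_combination (-Y ^ 2 - Z ^ 2) * I_sq - Z ^ 2 * I ^ 2 / 2 * hsqrt

theorem sphereVec_neg (X Y Z : ℝ) : sphereVec (-X) (-Y) (-Z) = -sphereVec X Y Z := by
  funext i
  fin_cases i <;> simp [sphereVec] <;> ring

theorem sphereVec_inj {X Y Z X' Y' Z' : ℝ} :
    sphereVec X Y Z = sphereVec X' Y' Z' ↔ X = X' ∧ Y = Y' ∧ Z = Z' := by
  refine ⟨fun h => ?_, fun ⟨hX, hY, hZ⟩ => hX ▸ hY ▸ hZ ▸ rfl⟩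
  have h0 := congrFun h 0
  have h1 := congrFun h 1
  simp only [sphereVec, Matrix.cons_val_zero, Matrix.cons_val_one, Complex.ext_iff] at h0 h1
  simp_all

theorem mk_sphereVec_eq_mk_sphereVec_iff {X Y Z X' Y' Z' : ℝ} (h : X ^ 2 + Y ^ 2 + Z ^ 2 = 1)
    (h' : X' ^ 2 + Y' ^ 2 + Z' ^ 2 = 1) :
    mk ℂ (sphereVec X Y Z) (sphereVec_ne_zero h) =
        mk ℂ (sphereVec X' Y' Z') (sphereVec_ne_zero h') ↔
      (X', Y', Z') = (X, Y, Z) ∨ (X', Y', Z') = (-X, -Y, -Z) := by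
  rw [mk_eq_mk_iff_of_sq_homogeneous chiangForm chiangForm_smul _ _
    (by rw [chiangForm_sphereVec, h, ofReal_one]) (by rw [chiangForm_sphereVec, h', ofReal_one]),
    ← sphereVec_neg, sphereVec_inj, sphereVec_inj]
  simp only [Prod.mk.injEq, eq_comm (a := X'), eq_comm (a := Y'), eq_comm (a := Z'),
    neg_eq_iff_eq_neg]

noncomputable def Setoid.quotientEquivOfSurjective {α β : Type*} (r : Setoid α) (f : α → β)
    (hr : ∀ a b, r a b ↔ f a = f b) (hf : Function.Surjective f) : Quotient r ≃ β :=
  (Quotient.congrRight hr).trans (Setoid.quotientKerEquivOfSurjective f hf)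

noncomputable def sphereToL2 (v : Sphere2) : ChiangL2 :=
  ⟨mk ℂ (sphereVec v.1.1 v.1.2.1 v.1.2.2) (sphereVec_ne_zero v.2),
    v.1.1, v.1.2.1, v.1.2.2, v.2, rfl⟩

theorem antipodalRel_iff_sphereToL2_eq (v w : Sphere2) :
    antipodalRel v w ↔ sphereToL2 v = sphereToL2 w :=
  (Subtype.ext_iff.trans (mk_sphereVec_eq_mk_sphereVec_iff v.2 w.2)).symm

theorem sphereToL2_surjective : Function.Surjective sphereToL2 := by
  rintro ⟨_, X, Y, Z, h, rfl⟩
  exact ⟨⟨(X, Y, Z), h⟩, rfl⟩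

noncomputable def sphereQuotEquivChiangL2 : Quotient antipodalRel ≃ ChiangL2 :=
  Setoid.quotientEquivOfSurjective _ _ antipodalRel_iff_sphereToL2_eq sphereToL2_surjective

def sumSq (u : Fin 3 → ℝ) : ℝ := ∑ i, u i ^ 2

theorem sumSq_smul (a : ℝ) (u : Fin 3 → ℝ) : sumSq (a • u) = a ^ 2 * sumSq u := by
  simp only [sumSq, Pi.smul_apply, smul_eq_mul, mul_pow, Finset.mul_sum]

theorem sumSq_pos {u : Fin 3 → ℝ} (hu : u ≠ 0) : 0 < sumSq u := by
  obtain ⟨i, hi⟩ := Function.ne_iff.mp hu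
  exact Finset.sum_pos' (fun j _ => sq_nonneg (u j))
    ⟨i, Finset.mem_univ i, pow_two_pos_of_ne_zero hi⟩

def tripleVec (v : ℝ × ℝ × ℝ) : Fin 3 → ℝ := ![v.1, v.2.1, v.2.2]

theorem sumSq_tripleVec (v : ℝ × ℝ × ℝ) :
    sumSq (tripleVec v) = v.1 ^ 2 + v.2.1 ^ 2 + v.2.2 ^ 2 := by
  simp [sumSq, tripleVec, Fin.sum_univ_three]

theorem tripleVec_neg (v : ℝ × ℝ × ℝ) : tripleVec (-v) = -tripleVec v := by
  funext i
  fin_cases i <;> rfl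

theorem tripleVec_injective : Function.Injective tripleVec := by
  intro v w h
  have h0 := congrFun h 0
  have h1 := congrFun h 1
  have h2 := congrFun h 2
  simp_all [tripleVec, Prod.ext_iff]

theorem tripleVec_ne_zero (v : Sphere2) : tripleVec v.1 ≠ 0 := fun h0 => by
  simpa [h0, sumSq] using (sumSq_tripleVec v.1).trans v.2

noncomputable def sphereToRP2 (v : Sphere2) : Projectivization ℝ (Fin 3 → ℝ) :=
  mk ℝ (tripleVec v.1) (tripleVec_ne_zero v)

theorem antipodalRel_iff_sphereToRP2_eq (v w : Sphere2) :
    antipodalRel v w ↔ sphereToRP2 v = sphereToRP2 w := by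
  rw [eq_comm, sphereToRP2, sphereToRP2, mk_eq_mk_iff_of_sq_homogeneous sumSq sumSq_smul _ _
    ((sumSq_tripleVec _).trans w.2) ((sumSq_tripleVec _).trans v.2), ← tripleVec_neg,
    tripleVec_injective.eq_iff, tripleVec_injective.eq_iff]
  rfl

theorem sphereToRP2_surjective : Function.Surjective sphereToRP2 := by
  intro p
  induction p using Projectivization.ind with | h u hu => ?_
  set r := Real.sqrt (sumSq u)
  have hunit : sumSq (r⁻¹ • u) = 1 := by
    rw [sumSq_smul, inv_pow, Real.sq_sqrt (sumSq_pos hu).le, inv_mul_cancel₀ (sumSq_pos hu).ne']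
  refine ⟨⟨((r⁻¹ • u) 0, (r⁻¹ • u) 1, (r⁻¹ • u) 2), ?_⟩, ?_⟩
  · simpa [sumSq, Fin.sum_univ_three] using hunit
  · refine (mk_eq_mk_iff' ℝ _ _ _ hu).mpr ⟨r⁻¹, ?_⟩
    funext i
    fin_cases i <;> rfl

noncomputable def projEquivSphereQuot :
    Projectivization ℝ (Fin 3 → ℝ) ≃ Quotient antipodalRel :=
  (Setoid.quotientEquivOfSurjective _ _ antipodalRel_iff_sphereToRP2_eq
    sphereToRP2_surjective).symm

/-- The map `f(X,Y,Z) = [X - iY : √2 i Z : X + iY]` identifies exactly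
antipodal points of `S²`, hence induces a bijection from `S² / ±1` onto `𝓛₂`, so `𝓛₂` is in
bijection with `ℝP²`. -/
theorem stmt_3 :
    (∀ (X Y Z X' Y' Z' : ℝ) (h : X ^ 2 + Y ^ 2 + Z ^ 2 = 1)
        (h' : X' ^ 2 + Y' ^ 2 + Z' ^ 2 = 1),
      Projectivization.mk ℂ (sphereVec X Y Z) (sphereVec_ne_zero h) =
          Projectivization.mk ℂ (sphereVec X' Y' Z') (sphereVec_ne_zero h') ↔
        ((X', Y', Z') = (X, Y, Z) ∨ (X', Y', Z') = (-X, -Y, -Z))) ∧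
    Nonempty (Quotient antipodalRel ≃ ↥ChiangL2) ∧
    Nonempty (Projectivization ℝ (Fin 3 → ℝ) ≃ ↥ChiangL2) :=
  ⟨fun _ _ _ _ _ _ h h' => mk_sphereVec_eq_mk_sphereVec_iff h h', ⟨sphereQuotEquivChiangL2⟩,
    ⟨projEquivSphereQuot.trans sphereQuotEquivChiangL2⟩⟩
end

section
/- Let α, β ∈ ℂ with |α|²+|β|²=1. Then the point [ᾱ²+β̄² : √2(ᾱβ−αβ̄) : α²+β²] ∈ ℙ(ℂ³) equals [1:0:1] if and only if α and β are both real or both purely imaginary (i.e. Im α = Im β = 0, or Re α = Re β = 0). (This computes the stabilizer of [1:0:1] for the SU(2)-action, a subgroup whose identity component is a circle.) -/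
open Complex

open ComplexConjugate

theorem Projectivization.mk_eq_mk_one_zero_one_iff {K : Type*} [Field K] {v : Fin 3 → K}
    (hv : v ≠ 0) (h₁₀₁ : ![(1 : K), 0, 1] ≠ 0) :
    Projectivization.mk K v hv = Projectivization.mk K ![1, 0, 1] h₁₀₁ ↔ v 1 = 0 ∧ v 0 = v 2 := by
  rw [Projectivization.mk_eq_mk_iff']
  constructor
  · rintro ⟨a, rfl⟩
    simp
  · rintro ⟨h₁, h₀₂⟩
    refine ⟨v 0, funext fun i => ?_⟩
    fin_cases i <;> simp [h₁, h₀₂]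

theorem Complex.conj_mul_sub_mul_conj_eq_zero_iff (α β : ℂ) :
    conj α * β - α * conj β = 0 ↔ (conj α * β).im = 0 := by
  have hconj : α * conj β = conj (conj α * β) := by simp [mul_comm]
  rw [hconj, sub_conj, mul_eq_zero, ofReal_eq_zero]
  simp [I_ne_zero]

theorem Complex.conj_sq_add_conj_sq_eq_iff (α β : ℂ) :
    conj α ^ 2 + conj β ^ 2 = α ^ 2 + β ^ 2 ↔ (α ^ 2 + β ^ 2).im = 0 := by
  rw [← conj_eq_iff_im, map_add, map_pow, map_pow]

/-- For `α = a + bi`, `β = c + di` the two imaginary parts are the cross and (twice the) dot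
product of `(a, c)` and `(b, d)`; by Lagrange's identity
`(a² + c²)(b² + d²) = (ab + cd)² + (ad - bc)²` one of these vectors vanishes. -/
theorem Complex.im_conj_mul_eq_zero_and_im_sq_add_sq_eq_zero_iff (α β : ℂ) :
    (conj α * β).im = 0 ∧ (α ^ 2 + β ^ 2).im = 0 ↔
      (α.im = 0 ∧ β.im = 0) ∨ (α.re = 0 ∧ β.re = 0) := by
  obtain ⟨a, b⟩ := α
  obtain ⟨c, d⟩ := β
  simp only [mul_im, conj_re, conj_im, add_im, pow_two]
  constructor
  · rintro ⟨hcross, hdot⟩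
    have lagrange : (a ^ 2 + c ^ 2) * (b ^ 2 + d ^ 2) = 0 := by
      linear_combination (a * d - b * c) * hcross + (a * b + c * d) / 2 * hdot
    rcases mul_eq_zero.mp lagrange with h | h
    · right
      constructor <;> nlinarith [sq_nonneg a, sq_nonneg c]
    · left
      constructor <;> nlinarith [sq_nonneg b, sq_nonneg d]
  · rintro (⟨rfl, rfl⟩ | ⟨rfl, rfl⟩) <;> constructor <;> ring

/-- The point `[ᾱ² + β̄² : √2(ᾱβ - αβ̄) : α² + β²]` equals `[1 : 0 : 1]` if
and only if `α` and `β` are both real or both purely imaginary: this computes the stabilizer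
of `[1 : 0 : 1]` for the `SU(2)`-action. -/
theorem stmt_4 (α β : ℂ) (h : ‖α‖ ^ 2 + ‖β‖ ^ 2 = 1) :
    Projectivization.mk ℂ (orbitVec α β) (orbitVec_ne_zero h) =
        Projectivization.mk ℂ ![(1 : ℂ), 0, 1]
          (by intro h0; simpa using congrFun h0 0) ↔
      ((α.im = 0 ∧ β.im = 0) ∨ (α.re = 0 ∧ β.re = 0)) := by
  have hsqrt2 : (Real.sqrt 2 : ℂ) ≠ 0 := by simp
  rw [Projectivization.mk_eq_mk_one_zero_one_iff,
    ← im_conj_mul_eq_zero_and_im_sq_add_sq_eq_zero_iff]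
  simp only [orbitVec, Matrix.cons_val_zero, Matrix.cons_val_one, Matrix.cons_val_two,
    Matrix.head_cons, Matrix.tail_cons, mul_eq_zero, hsqrt2, false_or,
    conj_mul_sub_mul_conj_eq_zero_iff, conj_sq_add_conj_sq_eq_iff]
end

section
/- For all α, β ∈ ℂ, setting z₀ = ᾱ²+β̄², z₁ = √2(ᾱβ−αβ̄), z₂ = α²+β², one has |z₀| = |z₂| and z₀·z̄₁ + z₁·z̄₂ = 0. Hence every point of the Chiang-type lagrangian 𝓛₂ lies in the zero level set of the SU(2) moment map 𝜇̃̃[z₀:z₁:z₂] = (|z₀|²−|z₂|², −√2·Re(z₀z̄₁+z₁z̄₂), −√2·Im(z₀z̄₁+z₁z̄₂)) (computed on unit-norm representatives). -/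
/-! Since `z₀ = z̄₂` and `z₁` is purely imaginary, `z₀ z̄₁ + z₁ z̄₂ = -z̄₂ z₁ + z₁ z̄₂ = 0`. -/

open Complex

section StarCommRing

variable {R : Type*} [CommRing R] [StarRing R]

theorem star_mul_sub_mul_star_mem_skewAdjoint (a b : R) :
    star a * b - a * star b ∈ skewAdjoint R := by
  rw [skewAdjoint.mem_iff, star_sub, star_mul, star_mul, star_star, star_star]
  ring

theorem star_mul_star_add_mul_star_of_mem_skewAdjoint {u v : R} (hv : v ∈ skewAdjoint R) :
    star u * star v + v * star u = 0 := by
  rw [skewAdjoint.mem_iff.mp hv]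
  ring

end StarCommRing

/-- For all `α, β ∈ ℂ`, setting `z₀ = ᾱ² + β̄²`,
`z₁ = √2(ᾱβ - αβ̄)`, `z₂ = α² + β²`, one has `|z₀| = |z₂|` and `z₀ z̄₁ + z₁ z̄₂ = 0`; hence
every point of the Chiang-type lagrangian lies in the zero level set of the `SU(2)` moment
map `(|z₀|² - |z₂|², -√2 Re (z₀ z̄₁ + z₁ z̄₂), -√2 Im (z₀ z̄₁ + z₁ z̄₂))`. -/
theorem stmt_5 (α β : ℂ)
    (z₀ z₁ z₂ : ℂ)
    (hz₀ : z₀ = (starRingEnd ℂ α) ^ 2 + (starRingEnd ℂ β) ^ 2)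
    (hz₁ : z₁ = (Real.sqrt 2 : ℂ) * ((starRingEnd ℂ α) * β - α * (starRingEnd ℂ β)))
    (hz₂ : z₂ = α ^ 2 + β ^ 2) :
    ‖z₀‖ = ‖z₂‖ ∧
    z₀ * starRingEnd ℂ z₁ + z₁ * starRingEnd ℂ z₂ = 0 ∧
    ‖z₀‖ ^ 2 - ‖z₂‖ ^ 2 = 0 ∧
    -Real.sqrt 2 * (z₀ * starRingEnd ℂ z₁ + z₁ * starRingEnd ℂ z₂).re = 0 ∧
    -Real.sqrt 2 * (z₀ * starRingEnd ℂ z₁ + z₁ * starRingEnd ℂ z₂).im = 0 := by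
  have hz₀_conj : z₀ = starRingEnd ℂ z₂ := by
    simp only [hz₀, hz₂, map_add, map_pow]
  have hz₁_skew : z₁ ∈ skewAdjoint ℂ := by
    rw [hz₁, ← real_smul]
    exact skewAdjoint.smul_mem _ (star_mul_sub_mul_star_mem_skewAdjoint α β)
  have hnorm : ‖z₀‖ = ‖z₂‖ := by
    rw [hz₀_conj, norm_conj]
  have hsum : z₀ * starRingEnd ℂ z₁ + z₁ * starRingEnd ℂ z₂ = 0 := by
    rw [hz₀_conj]
    exact star_mul_star_add_mul_star_of_mem_skewAdjoint hz₁_skew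
  exact ⟨hnorm, hsum, by rw [hnorm, sub_self], by simp [hsum], by simp [hsum]⟩
end

section
/- In the interior of the moment polytope, 𝓛₂ intersects each orbit of the second circle action at most once: let (X,Y,Z) and (X',Y',Z') be real triples with X²+Y²+Z²=1, X'²+Y'²+Z'²=1, X²+Y² ≠ 0 and Z ≠ 0, and let θ ∈ ℝ. If [X'−iY' : √2·i·Z' : X'+iY'] = [X−iY : √2·i·Z : e^{iθ}(X+iY)] in ℙ(ℂ³), then e^{iθ} = 1. -/
open Complex

lemma act2Vec_ne_zero {X Y Z : ℝ} (θ : ℝ) (h : X ^ 2 + Y ^ 2 + Z ^ 2 = 1) :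
    ![(X : ℂ) - Complex.I * Y, (Real.sqrt 2 : ℂ) * Complex.I * Z,
      Complex.exp (Complex.I * θ) * ((X : ℂ) + Complex.I * Y)] ≠ 0 := by
  intro h0
  have e0 : (X : ℂ) - Complex.I * Y = 0 := congrFun h0 0
  have e1 : (Real.sqrt 2 : ℂ) * Complex.I * Z = 0 := congrFun h0 1
  have e2 : Complex.exp (Complex.I * θ) * ((X : ℂ) + Complex.I * Y) = 0 := congrFun h0 2
  have e2' : (X : ℂ) + Complex.I * Y = 0 :=
    (mul_eq_zero.mp e2).resolve_left (Complex.exp_ne_zero _)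
  apply sphereVec_ne_zero h
  funext i
  fin_cases i
  · simpa [sphereVec] using e0
  · simpa [sphereVec] using e1
  · simpa [sphereVec] using e2'

lemma conj_eq_self_of_mul_ofReal_eq_ofReal {a : ℂ} {r s : ℝ} (hr : r ≠ 0) (h : a * r = s) :
    (starRingEnd ℂ) a = a := by
  have him : a.im * r = 0 := by simpa using congrArg Complex.im h
  exact Complex.conj_eq_iff_im.mpr ((mul_eq_zero.mp him).resolve_right hr)

lemma ofReal_add_I_mul_ne_zero {X Y : ℝ} (h : X ^ 2 + Y ^ 2 ≠ 0) : (X : ℂ) + I * Y ≠ 0 :=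
  fun h0 => h (by rw [← normSq_add_mul_I, mul_comm (Y : ℂ), h0, map_zero])

lemma conj_ofReal_sub_I_mul (X Y : ℝ) : (starRingEnd ℂ) ((X : ℂ) - I * Y) = X + I * Y := by
  simp only [map_sub, map_mul, conj_ofReal, conj_I]
  ring

/-- In the interior of the moment polytope, `𝓛₂` intersects each orbit of
the second circle action `[z₀ : z₁ : z₂] ↦ [z₀ : z₁ : e^{iθ} z₂]` at most once. -/
theorem stmt_10 (X Y Z X' Y' Z' θ : ℝ)
    (h : X ^ 2 + Y ^ 2 + Z ^ 2 = 1) (h' : X' ^ 2 + Y' ^ 2 + Z' ^ 2 = 1)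
    (hXY : X ^ 2 + Y ^ 2 ≠ 0) (hZ : Z ≠ 0)
    (heq : Projectivization.mk ℂ (sphereVec X' Y' Z') (sphereVec_ne_zero h') =
      Projectivization.mk ℂ
        ![(X : ℂ) - Complex.I * Y, (Real.sqrt 2 : ℂ) * Complex.I * Z,
          Complex.exp (Complex.I * θ) * ((X : ℂ) + Complex.I * Y)]
        (act2Vec_ne_zero θ h)) :
    Complex.exp (Complex.I * θ) = 1 := by
  obtain ⟨a, ha⟩ := (Projectivization.mk_eq_mk_iff ..).mp heq
  have e0 : (a : ℂ) * (X - I * Y) = X' - I * Y' := by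
    simpa [sphereVec, Units.smul_def] using congrFun ha 0
  have e1 : (a : ℂ) * (Real.sqrt 2 * I * Z) = Real.sqrt 2 * I * Z' := by
    simpa [sphereVec, Units.smul_def] using congrFun ha 1
  have e2 : (a : ℂ) * (exp (I * θ) * (X + I * Y)) = X' + I * Y' := by
    simpa [sphereVec, Units.smul_def] using congrFun ha 2
  have hs2I : (Real.sqrt 2 : ℂ) * I ≠ 0 :=
    mul_ne_zero (by exact_mod_cast (Real.sqrt_pos.mpr two_pos).ne') I_ne_zero
  -- The middle coordinate is `√2 i` times a real number, so the scalar `a` is real.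
  have ha_real : (starRingEnd ℂ) (a : ℂ) = a :=
    conj_eq_self_of_mul_ofReal_eq_ofReal hZ
      (mul_left_cancel₀ hs2I (by linear_combination e1 :
        (Real.sqrt 2 * I : ℂ) * (a * Z) = Real.sqrt 2 * I * Z'))
  -- Conjugating the first coordinate then gives `a (X + iY) = X' + iY'`, as does the third.
  have e0_conj : (a : ℂ) * (X + I * Y) = X' + I * Y' := by
    simpa only [map_mul, ha_real, conj_ofReal_sub_I_mul] using congrArg (starRingEnd ℂ) e0
  have hexp : exp (I * θ) * (X + I * Y) = X + I * Y :=
    mul_left_cancel₀ a.ne_zero (e2.trans e0_conj.symm)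
  exact mul_right_cancel₀ (ofReal_add_I_mul_ne_zero hXY) (hexp.trans (one_mul _).symm)
end
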